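/- (Multi-step bound for gradual sampling, Phase 1.) Let F_s, F_l : ℝ^d → ℝ be differentiable, let p ∈ [0,1], set 𝓛 = (1 − p)F_s + pF_l, and suppose 𝓛 is L-smooth, satisfies the μ-PL condition with infimum value 𝓛*, and ‖∇F_s(w) − ∇F_l(w)‖ ≤ Δ̂ for all w ∈ ℝ^d. Let (W_t) be adapted to a filtration (𝓕_t) with deterministic initial point W_0 = w_0, and let G_t be square-integrable, 𝓕_{t+1}-measurable ℝ^d-valued random vectors with, almost surely, W_{t+1} = W_t − η₁G_t, E[G_t | 𝓕_t] = ∇F_s(W_t), and E[‖G_t − ∇F_s(W_t)‖² | 𝓕_t] ≤ σ². If 0 < η₁ ≤ 1/L and η₁μ ≤ 1, then for every n' ∈ ℕ, E[𝓛(W_{n'})] − 𝓛* ≤ exp(−η₁μn')(𝓛(w_0) − 𝓛*) + p²Δ̂²/(2μ) + η₁σ²L/(2μ). -/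

import Mathlib

/-!
For `η ≤ 1/L`, the descent lemma bounds one step `w ↦ w - η g` of the iteration. Writing
`g = ∇F_s(w) + ξ` and `a = ∇𝓛(w)`, `b = ∇F_s(w)`, it gives
`𝓛(w - η g) ≤ 𝓛(w) + (η/2) (‖b - a‖² - ‖a‖²) + ⟪V, ξ⟫ + (L η²/2) ‖ξ‖²`
with `V = L η² b - η a` a function of `w` alone. In expectation the cross term vanishes, since
`E[ξ | 𝓕_t] = 0` and `V` is `𝓕_t`-measurable, while `E ‖ξ‖² ≤ σ²`; the bias
`b - a = p (∇F_s - ∇F_l)(w)` has norm at most `p Δ̂`, and PL turns `-‖a‖²` into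
`-2μ (𝓛(w) - 𝓛*)`. Hence `a_t = E 𝓛(W_t) - 𝓛*` satisfies `a_{t+1} ≤ (1 - η μ) a_t + η μ B`,
which unrolls, using `1 - x ≤ e^{-x}`, to `a_n ≤ e^{-η μ n} a_0 + B`.
-/

open MeasureTheory RealInnerProductSpace
open scoped NNReal

theorem le_add_deriv_add_of_deriv_sub_le {φ φ' : ℝ → ℝ} {M : ℝ}
    (hφ : ∀ t, HasDerivAt φ (φ' t) t) (hM : ∀ t ∈ Set.Ioo (0 : ℝ) 1, φ' t - φ' 0 ≤ M * t) :
    φ 1 ≤ φ 0 + φ' 0 + M / 2 := by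
  set ψ : ℝ → ℝ := fun t => φ t - t * φ' 0 - M / 2 * t ^ 2
  have hψ : ∀ t, HasDerivAt ψ (φ' t - φ' 0 - M * t) t := fun t => by
    refine (((hφ t).sub ((hasDerivAt_id t).mul_const (φ' 0))).sub
      ((hasDerivAt_pow 2 t).const_mul (M / 2))).congr_deriv ?_
    simp only [one_mul, Nat.cast_ofNat]
    ring
  have hanti : AntitoneOn ψ (Set.Icc 0 1) :=
    antitoneOn_of_hasDerivWithinAt_nonpos (convex_Icc 0 1)
      (fun t _ => (hψ t).continuousAt.continuousWithinAt)
      (fun t _ => (hψ t).hasDerivWithinAt)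
      (fun t ht => by rw [interior_Icc] at ht; linarith [hM t ht])
  have := hanti (by simp) (by simp) zero_le_one
  simp only [ψ] at this
  linarith

theorem le_exp_mul_add_of_le_one_sub_mul_add {a : ℕ → ℝ} {ρ B : ℝ} (hρ : ρ ≤ 1)
    (hB : 0 ≤ B) (ha₀ : 0 ≤ a 0) (ha : ∀ n, a (n + 1) ≤ (1 - ρ) * a n + ρ * B) (n : ℕ) :
    a n ≤ Real.exp (-ρ * n) * a 0 + B := by
  have hcontract : ∀ n, a n - B ≤ (1 - ρ) ^ n * (a 0 - B) := by
    intro n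
    induction n with
    | zero => simp
    | succ n ih =>
      calc a (n + 1) - B ≤ (1 - ρ) * (a n - B) := by linarith [ha n]
        _ ≤ (1 - ρ) * ((1 - ρ) ^ n * (a 0 - B)) := by gcongr
        _ = (1 - ρ) ^ (n + 1) * (a 0 - B) := by ring
  have hpow : (1 - ρ) ^ n ≤ Real.exp (-ρ * n) := by
    calc (1 - ρ) ^ n ≤ Real.exp (-ρ) ^ n :=
          pow_le_pow_left₀ (by linarith) (Real.one_sub_le_exp_neg ρ) n
      _ = Real.exp (-ρ * n) := by rw [← Real.exp_nat_mul]; ring_nf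
  have hB' : 0 ≤ (1 - ρ) ^ n * B := mul_nonneg (pow_nonneg (by linarith) n) hB
  linarith [hcontract n, mul_le_mul_of_nonneg_right hpow ha₀]

theorem LipschitzWith.norm_le_add_mul {F G : Type*} [SeminormedAddCommGroup F]
    [SeminormedAddCommGroup G] {h : F → G} {K : ℝ≥0} (hh : LipschitzWith K h) (x : F) :
    ‖h x‖ ≤ ‖h 0‖ + K * ‖x‖ := by
  have := hh.norm_sub_le x 0
  rw [sub_zero] at this
  linarith [norm_le_insert' (h x) (h 0)]

section Calculus

variable {E : Type*} [NormedAddCommGroup E] [InnerProductSpace ℝ E] [CompleteSpace E]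

theorem le_add_inner_gradient_add_of_lipschitzWith {f : E → ℝ} {K : ℝ≥0}
    (hf : Differentiable ℝ f) (hK : LipschitzWith K (gradient f)) (x y : E) :
    f y ≤ f x + ⟪gradient f x, y - x⟫ + K / 2 * ‖y - x‖ ^ 2 := by
  set v := y - x
  have hφ : ∀ t : ℝ, HasDerivAt (fun s : ℝ => f (x + s • v)) ⟪gradient f (x + t • v), v⟫ t := by
    intro t
    have hline : HasDerivAt (fun s : ℝ => x + s • v) v t := by
      simpa using ((hasDerivAt_id t).smul_const v).const_add x
    simpa [Function.comp_def] using
      (hf (x + t • v)).hasGradientAt.hasFDerivAt.comp_hasDerivAt t hline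
  have hM : ∀ t ∈ Set.Ioo (0 : ℝ) 1,
      ⟪gradient f (x + t • v), v⟫ - ⟪gradient f (x + (0 : ℝ) • v), v⟫ ≤ (K * ‖v‖ ^ 2) * t := by
    intro t ht
    calc ⟪gradient f (x + t • v), v⟫ - ⟪gradient f (x + (0 : ℝ) • v), v⟫
        = ⟪gradient f (x + t • v) - gradient f x, v⟫ := by simp [inner_sub_left]
      _ ≤ ‖gradient f (x + t • v) - gradient f x‖ * ‖v‖ := real_inner_le_norm _ _
      _ ≤ K * ‖t • v‖ * ‖v‖ := by
          gcongr
          simpa [dist_eq_norm] using hK.dist_le_mul (x + t • v) x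
      _ = (K * ‖v‖ ^ 2) * t := by
          rw [norm_smul, Real.norm_of_nonneg ht.1.le]; ring
  have := le_add_deriv_add_of_deriv_sub_le hφ hM
  simp only [zero_smul, add_zero, one_smul, v, add_sub_cancel] at this
  linarith

theorem gradient_sub_gradient_mix {f₁ f₂ : E → ℝ} (h₁ : Differentiable ℝ f₁)
    (h₂ : Differentiable ℝ f₂) (p : ℝ) (v : E) :
    gradient f₁ v - gradient (fun w => (1 - p) * f₁ w + p * f₂ w) v
      = p • (gradient f₁ v - gradient f₂ v) := by
  have hmix : HasFDerivAt (fun w => (1 - p) * f₁ w + p * f₂ w)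
      ((1 - p) • fderiv ℝ f₁ v + p • fderiv ℝ f₂ v) v :=
    ((h₁ v).hasFDerivAt.const_mul (1 - p)).add ((h₂ v).hasFDerivAt.const_mul p)
  rw [hmix.hasGradientAt.gradient, ← toDual_gradient, ← toDual_gradient]
  simp only [map_add, map_smul, LinearIsometryEquiv.symm_apply_apply]
  module

theorem measurable_gradient [MeasurableSpace E] [BorelSpace E] [SecondCountableTopology E]
    (f : E → ℝ) : Measurable (gradient f) :=
  (InnerProductSpace.toDual ℝ E).symm.continuous.measurable.comp (measurable_fderiv ℝ f)

theorem gradient_step_le {f : E → ℝ} {K : ℝ≥0} {μ fstar β η : ℝ}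
    (hf : Differentiable ℝ f) (hK : LipschitzWith K (gradient f)) {w b g : E}
    (hPL : 2 * μ * (f w - fstar) ≤ ‖gradient f w‖ ^ 2) (hb : ‖b - gradient f w‖ ≤ β)
    (hη : 0 ≤ η) (hηK : η * K ≤ 1) :
    f (w - η • g) ≤ (1 - η * μ) * f w + η * μ * fstar + η * β ^ 2 / 2
      + ⟪(K * η ^ 2) • b - η • gradient f w, g - b⟫ + K * η ^ 2 / 2 * ‖g - b‖ ^ 2 := by
  set a := gradient f w
  set ξ := g - b
  have hdesc := le_add_inner_gradient_add_of_lipschitzWith hf hK w (w - η • g)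
  have hstep : w - η • g - w = -(η • (b + ξ)) := by simp [ξ]
  rw [hstep, inner_neg_right, norm_neg, inner_smul_right, inner_add_right, norm_smul,
    Real.norm_of_nonneg hη, mul_pow, norm_add_sq_real] at hdesc
  have hnoise : ⟪(K * η ^ 2) • b - η • a, ξ⟫ = K * η ^ 2 * ⟪b, ξ⟫ - η * ⟪a, ξ⟫ := by
    rw [inner_sub_left, inner_smul_left, inner_smul_left]; rfl
  have hbias : ‖b - a‖ ^ 2 ≤ β ^ 2 := pow_le_pow_left₀ (norm_nonneg _) hb 2
  have hbias' : ‖b - a‖ ^ 2 = ‖b‖ ^ 2 - 2 * ⟪a, b⟫ + ‖a‖ ^ 2 := by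
    rw [norm_sub_sq_real, real_inner_comm]
  have hsmall : η * (η * K) * ‖b‖ ^ 2 ≤ η * ‖b‖ ^ 2 := by
    nlinarith [mul_nonneg hη (sq_nonneg ‖b‖)]
  nlinarith [mul_le_mul_of_nonneg_left hPL hη, mul_le_mul_of_nonneg_left hbias hη]

end Calculus

section Probability

variable {Ω : Type*} {m mΩ : MeasurableSpace Ω} {P : Measure Ω}

theorem MeasureTheory.MemLp.comp_of_norm_le_add_mul [IsFiniteMeasure P] {E F : Type*}
    [NormedAddCommGroup E] [NormedAddCommGroup F] {X : Ω → E} {h : E → F} {a b : ℝ}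
    {p : ENNReal} (hX : MemLp X p P) (hh : AEStronglyMeasurable (fun ω => h (X ω)) P)
    (hab : ∀ x, ‖h x‖ ≤ a + b * ‖x‖) :
    MemLp (fun ω => h (X ω)) p P := by
  refine ((memLp_const a).add (hX.norm.const_mul b)).of_le hh
    (Filter.Eventually.of_forall fun ω => ?_)
  have hnn : 0 ≤ a + b * ‖X ω‖ := (norm_nonneg _).trans (hab _)
  simpa [Real.norm_of_nonneg hnn] using hab (X ω)

theorem integral_le_of_condExp_le (hm : m ≤ mΩ) [IsProbabilityMeasure P] {f : Ω → ℝ} {c : ℝ}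
    (hfc : ∀ᵐ ω ∂P, P[f|m] ω ≤ c) : ∫ ω, f ω ∂P ≤ c := by
  rw [← integral_condExp hm]
  simpa using integral_mono_ae integrable_condExp (integrable_const c) hfc

variable {E : Type*} [NormedAddCommGroup E] [InnerProductSpace ℝ E]

theorem MeasureTheory.MemLp.integrable_inner {V ξ : Ω → E} (hV : MemLp V 2 P)
    (hξ : MemLp ξ 2 P) : Integrable (fun ω => ⟪V ω, ξ ω⟫) P :=
  memLp_one_iff_integrable.1 <| hV.of_bilin (fun a b => ⟪a, b⟫) 1 hξ (hV.1.inner hξ.1)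
    (ae_of_all _ fun ω => by simpa using nnnorm_inner_le_nnnorm (𝕜 := ℝ) (V ω) (ξ ω))

variable [CompleteSpace E]

/-- In `L²`, conditional expectation is the orthogonal projection onto the `m`-measurable
functions. -/
theorem integral_inner_sub_eq_zero_of_condExp_ae_eq (hm : m ≤ mΩ) [IsFiniteMeasure P]
    {V G Y : Ω → E} (hV : MemLp V 2 P) (hVm : AEStronglyMeasurable[m] V P) (hG : MemLp G 2 P)
    (hY : MemLp Y 2 P) (hYm : StronglyMeasurable[m] Y) (hmean : P[G|m] =ᵐ[P] Y) :
    ∫ ω, ⟪V ω, G ω - Y ω⟫ ∂P = 0 := by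
  have hξ : MemLp (G - Y) 2 P := hG.sub hY
  have hξm : P[G - Y|m] =ᵐ[P] 0 := by
    filter_upwards [condExp_sub (hG.integrable one_le_two) (hY.integrable one_le_two) m, hmean]
      with ω hsub hω
    rw [hsub, Pi.sub_apply, hω, condExp_of_stronglyMeasurable hm hYm (hY.integrable one_le_two),
      sub_self, Pi.zero_apply]
  have h := inner_condExpL2_eq_inner_fun (𝕜 := ℝ) hm (hξ.toLp _) (hV.toLp V)
    (hVm.congr hV.coeFn_toLp.symm)
  rw [L2.inner_def, L2.inner_def] at h
  calc ∫ ω, ⟪V ω, G ω - Y ω⟫ ∂P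
      = ∫ ω, ⟪(hξ.toLp _ : Ω → E) ω, (hV.toLp V : Ω → E) ω⟫ ∂P := by
        refine integral_congr_ae ?_
        filter_upwards [hV.coeFn_toLp, hξ.coeFn_toLp] with ω hVω hξω
        rw [hVω, hξω, real_inner_comm, Pi.sub_apply]
    _ = 0 := by
        rw [← h, integral_eq_zero_of_ae]
        filter_upwards [(hξ.condExpL2_ae_eq_condExp (𝕜 := ℝ) hm).trans hξm] with ω hω
        rw [hω, Pi.zero_apply, inner_zero_left, Pi.zero_apply]

theorem integrable_comp_of_lipschitzWith_gradient [IsFiniteMeasure P] {f : E → ℝ} {K : ℝ≥0}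
    {c : ℝ} (hf : Differentiable ℝ f) (hK : LipschitzWith K (gradient f)) (hc : ∀ x, c ≤ f x)
    {X : Ω → E} (hX : MemLp X 2 P) :
    Integrable (fun ω => f (X ω)) P := by
  have hdom : Integrable
      (fun ω => |c| + |f 0| + ‖gradient f 0‖ * ‖X ω‖ + K / 2 * ‖X ω‖ ^ 2) P :=
    ((integrable_const _).add (((hX.integrable one_le_two).norm).const_mul _)).add
      (((memLp_two_iff_integrable_sq_norm hX.1).1 hX).const_mul _)
  refine hdom.mono' (hf.continuous.comp_aestronglyMeasurable hX.1)
    (Filter.Eventually.of_forall fun ω => ?_)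
  have hup := le_add_inner_gradient_add_of_lipschitzWith hf hK 0 (X ω)
  rw [sub_zero] at hup
  have hinner := real_inner_le_norm (gradient f 0) (X ω)
  rw [Real.norm_eq_abs, abs_le]
  constructor
  · nlinarith [hc (X ω), neg_abs_le c, abs_nonneg (f 0), norm_nonneg (gradient f 0),
      norm_nonneg (X ω), K.2]
  · nlinarith [le_abs_self (f 0), abs_nonneg c]

variable [MeasurableSpace E] [BorelSpace E] [SecondCountableTopology E]

theorem integral_gradient_step_le (hm : m ≤ mΩ) [IsProbabilityMeasure P] {f : E → ℝ}
    {g : E → E} {K : ℝ≥0} {μ fstar β σ η : ℝ} (hf : Differentiable ℝ f)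
    (hK : LipschitzWith K (gradient f)) (hmin : ∀ v, fstar ≤ f v)
    (hPL : ∀ v, 2 * μ * (f v - fstar) ≤ ‖gradient f v‖ ^ 2) (hg : Measurable g)
    (hb : ∀ v, ‖g v - gradient f v‖ ≤ β) (hη : 0 ≤ η) (hηK : η * K ≤ 1) {X G : Ω → E}
    (hXm : Measurable[m] X) (hX : MemLp X 2 P) (hG : MemLp G 2 P)
    (hmean : P[G|m] =ᵐ[P] fun ω => g (X ω))
    (hvar : ∀ᵐ ω ∂P, P[fun ω => ‖G ω - g (X ω)‖ ^ 2|m] ω ≤ σ ^ 2) :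
    ∫ ω, f (X ω - η • G ω) ∂P ≤ (1 - η * μ) * ∫ ω, f (X ω) ∂P + η * μ * fstar
      + η * β ^ 2 / 2 + K * η ^ 2 / 2 * σ ^ 2 := by
  have hgradXm : StronglyMeasurable[m] fun ω => gradient f (X ω) :=
    (hK.continuous.measurable.comp hXm).stronglyMeasurable
  have hgXm : StronglyMeasurable[m] fun ω => g (X ω) := (hg.comp hXm).stronglyMeasurable
  have hgradX : MemLp (fun ω => gradient f (X ω)) 2 P :=
    hX.comp_of_norm_le_add_mul (hgradXm.mono hm).aestronglyMeasurable hK.norm_le_add_mul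
  have hgX : MemLp (fun ω => g (X ω)) 2 P :=
    hX.comp_of_norm_le_add_mul (hgXm.mono hm).aestronglyMeasurable (a := β + ‖gradient f 0‖)
      (b := K) fun x => by
        linarith [norm_le_insert' (g x) (gradient f x), hb x, hK.norm_le_add_mul x]
  set ξ := fun ω => G ω - g (X ω)
  set V := fun ω => (K * η ^ 2) • g (X ω) - η • gradient f (X ω)
  have hξ : MemLp ξ 2 P := hG.sub hgX
  have hV : MemLp V 2 P := (hgX.const_smul ((K : ℝ) * η ^ 2)).sub (hgradX.const_smul η)
  have hortho : ∫ ω, ⟪V ω, ξ ω⟫ ∂P = 0 :=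
    integral_inner_sub_eq_zero_of_condExp_ae_eq hm hV
      ((hgXm.const_smul _).sub (hgradXm.const_smul _)).aestronglyMeasurable hG hgX hgXm hmean
  have hnoise : ∫ ω, ‖ξ ω‖ ^ 2 ∂P ≤ σ ^ 2 := integral_le_of_condExp_le hm hvar
  have hfX := integrable_comp_of_lipschitzWith_gradient hf hK hmin hX
  have hinner := hV.integrable_inner hξ
  have hsq := (memLp_two_iff_integrable_sq_norm hξ.1).1 hξ
  have hA := (hfX.const_mul (1 - η * μ)).fun_add (integrable_const (η * μ * fstar))
  have hB := hA.fun_add (integrable_const (η * β ^ 2 / 2))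
  calc ∫ ω, f (X ω - η • G ω) ∂P
      ≤ ∫ ω, ((1 - η * μ) * f (X ω) + η * μ * fstar + η * β ^ 2 / 2
          + ⟪V ω, ξ ω⟫ + K * η ^ 2 / 2 * ‖ξ ω‖ ^ 2) ∂P :=
        integral_mono (integrable_comp_of_lipschitzWith_gradient hf hK hmin
          (hX.sub (hG.const_smul η))) ((hB.fun_add hinner).fun_add (hsq.const_mul _))
          fun ω => gradient_step_le hf hK (hPL _) (hb _) hη hηK
    _ = (1 - η * μ) * ∫ ω, f (X ω) ∂P + η * μ * fstar + η * β ^ 2 / 2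
          + ∫ ω, ⟪V ω, ξ ω⟫ ∂P + K * η ^ 2 / 2 * ∫ ω, ‖ξ ω‖ ^ 2 ∂P := by
        rw [integral_add (hB.fun_add hinner) (hsq.const_mul _), integral_add hB hinner,
          integral_add hA (integrable_const _), integral_add (hfX.const_mul _) (integrable_const _),
          integral_const_mul, integral_const_mul, integral_const_mul, integral_const,
          integral_const, probReal_univ, one_smul, one_smul]
    _ ≤ (1 - η * μ) * ∫ ω, f (X ω) ∂P + η * μ * fstar
          + η * β ^ 2 / 2 + K * η ^ 2 / 2 * σ ^ 2 := by
        rw [hortho, add_zero]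
        gcongr

theorem integral_sgd_sub_le [IsProbabilityMeasure P] {f : E → ℝ} {g : E → E} {K : ℝ≥0}
    {μ fstar β σ η : ℝ} (hf : Differentiable ℝ f) (hK : LipschitzWith K (gradient f))
    (hmin : ∀ v, fstar ≤ f v) (hPL : ∀ v, 2 * μ * (f v - fstar) ≤ ‖gradient f v‖ ^ 2)
    (hμ : 0 < μ) (hg : Measurable g) (hb : ∀ v, ‖g v - gradient f v‖ ≤ β) (hη : 0 ≤ η)
    (hηK : η * K ≤ 1) (hημ : η * μ ≤ 1) (ℱ : Filtration ℕ mΩ) {W G : ℕ → Ω → E}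
    (hW : Adapted ℱ W) (hG : ∀ t, MemLp (G t) 2 P) {w₀ : E} (hW₀ : ∀ ω, W 0 ω = w₀)
    (hupdate : ∀ t, ∀ᵐ ω ∂P, W (t + 1) ω = W t ω - η • G t ω)
    (hmean : ∀ t, P[G t|ℱ t] =ᵐ[P] fun ω => g (W t ω))
    (hvar : ∀ t, ∀ᵐ ω ∂P, P[fun ω => ‖G t ω - g (W t ω)‖ ^ 2|ℱ t] ω ≤ σ ^ 2) (n : ℕ) :
    ∫ ω, f (W n ω) ∂P - fstar ≤ Real.exp (-(η * μ) * n) * (f w₀ - fstar)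
      + β ^ 2 / (2 * μ) + η * σ ^ 2 * K / (2 * μ) := by
  have hW2 : ∀ t, MemLp (W t) 2 P := by
    intro t
    induction t with
    | zero => exact (memLp_const w₀).ae_eq (ae_of_all _ fun ω => (hW₀ ω).symm)
    | succ t ih =>
      exact (ih.sub ((hG t).const_smul η)).ae_eq ((hupdate t).mono fun ω hω => hω.symm)
  have hstep : ∀ t, ∫ ω, f (W (t + 1) ω) ∂P - fstar
      ≤ (1 - η * μ) * (∫ ω, f (W t ω) ∂P - fstar)
        + η * μ * (β ^ 2 / (2 * μ) + η * σ ^ 2 * K / (2 * μ)) := by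
    intro t
    rw [integral_congr_ae ((hupdate t).mono fun ω hω => congrArg f hω)]
    have := integral_gradient_step_le (ℱ.le t) hf hK hmin hPL hg hb hη hηK (hW t) (hW2 t)
      (hG t) (hmean t) (hvar t)
    field_simp
    linarith
  have h₀ : ∫ ω, f (W 0 ω) ∂P = f w₀ := by simp [hW₀]
  have := le_exp_mul_add_of_le_one_sub_mul_add (a := fun n => ∫ ω, f (W n ω) ∂P - fstar) hημ
    (by positivity) (by rw [h₀]; linarith [hmin w₀]) hstep n
  rwa [h₀, ← add_assoc] at this

end Probability

theorem multi_step_gradual_sampling_phase1_general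
    {d : ℕ} (Fs Fl : EuclideanSpace ℝ (Fin d) → ℝ) (p : ℝ)
    (hp0 : 0 ≤ p)
    (hFs : Differentiable ℝ Fs) (hFl : Differentiable ℝ Fl)
    (𝓛 : EuclideanSpace ℝ (Fin d) → ℝ)
    (h𝓛 : 𝓛 = fun v => (1 - p) * Fs v + p * Fl v)
    (L μPL Lstar Δ σ : ℝ) (hL : 0 < L)
    (hsmooth : LipschitzWith (Real.toNNReal L) (gradient 𝓛))
    (hμ : 0 < μPL)
    (hattained : ∃ wstar, 𝓛 wstar = Lstar ∧ ∀ v, Lstar ≤ 𝓛 v)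
    (hPL : ∀ v, 2 * μPL * (𝓛 v - Lstar) ≤ ‖gradient 𝓛 v‖ ^ 2)
    (hΔ : ∀ v, ‖gradient Fs v - gradient Fl v‖ ≤ Δ)
    {Ω : Type*} {mΩ : MeasurableSpace Ω} (P : Measure Ω) [IsProbabilityMeasure P]
    (ℱ : Filtration ℕ mΩ)
    (W G : ℕ → Ω → EuclideanSpace ℝ (Fin d))
    (hadapted : Adapted ℱ W)
    (hG2 : ∀ t, MemLp (G t) 2 P)
    (w0 : EuclideanSpace ℝ (Fin d)) (hW0 : ∀ ω, W 0 ω = w0)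
    (η₁ : ℝ)
    (hupdate : ∀ t, ∀ᵐ ω ∂P, W (t + 1) ω = W t ω - η₁ • G t ω)
    (hmean : ∀ t, P[G t | ℱ t] =ᵐ[P] fun ω => gradient Fs (W t ω))
    (hvar : ∀ t, ∀ᵐ ω ∂P,
      (P[(fun ω' => ‖G t ω' - gradient Fs (W t ω')‖ ^ 2) | ℱ t]) ω ≤ σ ^ 2)
    (hη0 : 0 < η₁) (hη : η₁ ≤ 1 / L) (hημ : η₁ * μPL ≤ 1)
    (n' : ℕ) :
    (∫ ω, 𝓛 (W n' ω) ∂P) - Lstar ≤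
      Real.exp (-(η₁ * μPL) * n') * (𝓛 w0 - Lstar) +
        p ^ 2 * Δ ^ 2 / (2 * μPL) + η₁ * σ ^ 2 * L / (2 * μPL) := by
  obtain ⟨-, -, hmin⟩ := hattained
  subst h𝓛
  have hbias : ∀ v, ‖gradient Fs v - gradient (fun w => (1 - p) * Fs w + p * Fl w) v‖ ≤ p * Δ :=
    fun v => by
      rw [gradient_sub_gradient_mix hFs hFl, norm_smul, Real.norm_of_nonneg hp0]
      exact mul_le_mul_of_nonneg_left (hΔ v) hp0
  have hηL : η₁ * Real.toNNReal L ≤ 1 := by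
    rw [Real.coe_toNNReal _ hL.le]
    exact (le_div_iff₀ hL).1 hη
  have := integral_sgd_sub_le ((hFs.const_mul _).add (hFl.const_mul _)) hsmooth hmin hPL hμ
    (measurable_gradient Fs) hbias hη0.le hηL hημ ℱ hadapted hG2 hW0 hupdate hmean hvar n'
  rwa [Real.coe_toNNReal _ hL.le, mul_pow] at this

/-- Multi-step bound for gradual sampling (Phase 1): running SGD with stochastic
gradients unbiased for the small-variance component `Fs` of the mixture objective
`𝓛 = (1 - p) Fs + p Fl` converges linearly up to bias and noise floors. -/
theorem multi_step_gradual_sampling_phase1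
    {d : ℕ} (Fs Fl : EuclideanSpace ℝ (Fin d) → ℝ) (p : ℝ)
    (hp0 : 0 ≤ p) (hp1 : p ≤ 1)
    (hFs : Differentiable ℝ Fs) (hFl : Differentiable ℝ Fl)
    (𝓛 : EuclideanSpace ℝ (Fin d) → ℝ)
    (h𝓛 : 𝓛 = fun v => (1 - p) * Fs v + p * Fl v)
    (L μPL Lstar Δ σ : ℝ) (hL : 0 < L)
    (hsmooth : LipschitzWith (Real.toNNReal L) (gradient 𝓛))
    (hμ : 0 < μPL)
    (hattained : ∃ wstar, 𝓛 wstar = Lstar ∧ ∀ v, Lstar ≤ 𝓛 v)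
    (hPL : ∀ v, 2 * μPL * (𝓛 v - Lstar) ≤ ‖gradient 𝓛 v‖ ^ 2)
    (hΔ : ∀ v, ‖gradient Fs v - gradient Fl v‖ ≤ Δ)
    {Ω : Type*} {mΩ : MeasurableSpace Ω} (P : Measure Ω) [IsProbabilityMeasure P]
    (ℱ : Filtration ℕ mΩ)
    (W G : ℕ → Ω → EuclideanSpace ℝ (Fin d))
    (hadapted : Adapted ℱ W)
    (hGmeas : ∀ t, StronglyMeasurable[ℱ (t + 1)] (G t))
    (hG2 : ∀ t, MemLp (G t) 2 P)
    (w0 : EuclideanSpace ℝ (Fin d)) (hW0 : ∀ ω, W 0 ω = w0)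
    (η₁ : ℝ)
    (hupdate : ∀ t, ∀ᵐ ω ∂P, W (t + 1) ω = W t ω - η₁ • G t ω)
    (hmean : ∀ t, P[G t | ℱ t] =ᵐ[P] fun ω => gradient Fs (W t ω))
    (hvar : ∀ t, ∀ᵐ ω ∂P,
      (P[(fun ω' => ‖G t ω' - gradient Fs (W t ω')‖ ^ 2) | ℱ t]) ω ≤ σ ^ 2)
    (hη0 : 0 < η₁) (hη : η₁ ≤ 1 / L) (hημ : η₁ * μPL ≤ 1)
    (n' : ℕ) :
    (∫ ω, 𝓛 (W n' ω) ∂P) - Lstar ≤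
      Real.exp (-(η₁ * μPL) * n') * (𝓛 w0 - Lstar) +
        p ^ 2 * Δ ^ 2 / (2 * μPL) + η₁ * σ ^ 2 * L / (2 * μPL) :=
  multi_step_gradual_sampling_phase1_general Fs Fl p hp0 hFs hFl 𝓛 h𝓛 L μPL Lstar Δ σ hL hsmooth hμ
    hattained hPL hΔ P ℱ W G hadapted hG2 w0 hW0 η₁ hupdate hmean hvar hη0 hη hημ n'
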